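/- Let A₁,…,A_{n+2} : ℝ → ℝⁿ be C¹ maps and t₀ ∈ ℝ be such that the points A₁(t₀),…,A_{n+2}(t₀) are in general position, and let α₁,…,α_{n+2} be nonzero reals with Σᵢ αᵢ = 0 and Σᵢ αᵢAᵢ(t₀) = 0. Then for every k with 1 ≤ k ≤ n: Σ_{1≤i₁<⋯<i_{k+1}≤n+2} α_{i₁}⋯α_{i_{k+1}} · d/dt[det(⟨A_{i_a}(t) − A_{i₁}(t), A_{i_b}(t) − A_{i₁}(t)⟩)_{2≤a,b≤k+1}] evaluated at t = t₀ equals 0. -/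

import Mathlib

/-- Points `A₁, …, A_m` in `ℝ^d` are in general position if every `d+1` of them are
affinely independent. -/
def InGeneralPosition {d m : ℕ} (A : Fin m → EuclideanSpace ℝ (Fin d)) : Prop :=
  ∀ s : Finset (Fin m), s.card = d + 1 → AffineIndependent ℝ (fun i : ↥s => A i.1)

/-- The Gram determinant of the face with vertex set `s = {i₁ < ⋯ < i_{k+1}}`:
`det(⟨A_{i_a} − A_{i₁}, A_{i_b} − A_{i₁}⟩)_{2 ≤ a,b ≤ k+1}`, which equals `(k!)²` times
the squared `k`-volume of the corresponding simplex. -/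
noncomputable def gramFace {d m : ℕ} (A : Fin m → EuclideanSpace ℝ (Fin d))
    (s : Finset (Fin m)) : ℝ :=
  if h : s.Nonempty then
    Matrix.det (Matrix.of fun (a b : ↥(s.erase (s.min' h))) =>
      (inner ℝ (A a.1 - A (s.min' h)) (A b.1 - A (s.min' h)) : ℝ))
  else 0

/-!
Lift each point `A_j` to `(1, A_j)` and to `(0, A_j)`. The Gram determinant of a face is the
difference of the Gram determinants of its two lifts (shear the face so that one vertex
is the only one with a nonzero first coordinate). Since the sum of the principal `p`-minors of
`X * Y` equals that of `Y * X` (Weinstein–Aronszajn), the `α`-weighted sum of these Gram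
determinants over the `p`-subsets of points is the sum of the principal `p`-minors of the moment
matrix `M_c = ∑ j, α_j (c, A_j) (c, A_j)ᵀ` (`c = 1, 0`). The matrices `M_1` and `M_0` agree off
the first row and column, where `M_0` vanishes, so only the minors of `M_1` through the first index
survive. By `∑ α_j = 0` and `∑ α_j A_j(t₀) = 0`, the first row and column of `M_1` vanish at
`t₀` and its corner entry vanishes identically, so each of these minors vanishes to second
order at `t₀`.
-/

open Matrix Finset
open scoped RealInnerProductSpace

namespace Matrix

section PrincipalMinors

variable {R : Type*} [CommRing R] {m n : Type*} [Fintype m] [Fintype n] [DecidableEq m]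
  [DecidableEq n]

theorem sum_det_submatrix_mul_comm (A : Matrix m n R) (B : Matrix n m R) (k : ℕ) :
    ∑ s ∈ univ.powersetCard k, ((A * B).submatrix (Subtype.val : s → m) Subtype.val).det
      = ∑ s ∈ univ.powersetCard k, ((B * A).submatrix (Subtype.val : s → n) Subtype.val).det := by
  simp only [← coeff_det_one_add_X_smul_eq_sum_minors, Matrix.map_mul]
  rw [← Matrix.smul_mul, det_one_add_mul_comm, Matrix.mul_smul]

theorem sum_prod_mul_det_submatrix_transpose_mul_self (Q : Matrix m n R) (w : n → R) (k : ℕ) :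
    ∑ s ∈ univ.powersetCard k,
        (∏ j ∈ s, w j) * ((Qᵀ * Q).submatrix (Subtype.val : s → n) Subtype.val).det
      = ∑ r ∈ univ.powersetCard k,
          ((Q * diagonal w * Qᵀ).submatrix (Subtype.val : r → m) Subtype.val).det := by
  rw [Matrix.mul_assoc, sum_det_submatrix_mul_comm, Matrix.mul_assoc]
  refine sum_congr rfl fun s _ => ?_
  rw [← Finset.prod_coe_sort, ← det_mul_column]
  congr 1
  ext a b
  simp [diagonal_mul]

theorem det_add_single_self (M : Matrix n n R) (i : n) (c : R) :
    (M + single i i c).det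
      = M.det + c * (M.submatrix (Subtype.val : {a // a ≠ i} → n) Subtype.val).det := by
  have hrow : M + single i i c = M.updateRow i (M i + c • Pi.single i 1) := by
    ext a b
    by_cases ha : a = i
    · subst ha
      rcases eq_or_ne b a with rfl | hb
      · simp
      · simp [hb, hb.symm]
    · simp [ha, Ne.symm ha]
  have hminor : (M.updateRow i (Pi.single i 1)).det
      = (M.submatrix (Subtype.val : {a // a ≠ i} → n) Subtype.val).det := by
    calc (M.updateRow i (Pi.single i 1)).det
        = (of ((univ.erase i).piecewise M.row (1 : Matrix n n R).row)).det := by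
          congr 1
          ext a b
          by_cases ha : a = i <;> simp [ha, one_apply, Pi.single_apply, eq_comm]
      _ = _ := det_piecewise_one_eq_submatrix_det _ _
      _ = _ := (det_submatrix_equiv_self (Equiv.subtypeEquivRight (by simp)) _).symm
  rw [hrow, det_updateRow_add, updateRow_eq_self, det_updateRow_smul, hminor]

end PrincipalMinors

section Gram

variable {n : Type*} [Fintype n] [DecidableEq n] {E : Type*} [NormedAddCommGroup E]
  [InnerProductSpace ℝ E]

theorem det_const_add_inner_eq_det_gram_shear (u : n → E) (i : n) (c : ℝ) :
    (of fun a b => c + ⟪u a, u b⟫).det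
      = (gram ℝ (Function.update (fun a => u a - u i) i (u i)) + single i i c).det := by
  set v := Function.update (fun a => u a - u i) i (u i)
  set w : n → ℝ := Function.update 1 i 0
  have hvi : v i = u i := Function.update_self ..
  have hv : ∀ a ≠ i, v a = u a - u i := fun a ha => Function.update_of_ne ha ..
  have hwi : w i = 0 := Function.update_self ..
  have hw : ∀ a ≠ i, w a = 1 := fun a ha => Function.update_of_ne ha ..
  calc (of fun a b => c + ⟪u a, u b⟫).det
      = (of fun a b => (if a = i then c else 0) + ⟪v a, u b⟫).det := by
        refine det_eq_of_forall_row_eq_smul_add_const w i hwi fun a b => ?_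
        rcases eq_or_ne a i with rfl | ha
        · simp [hvi, hwi]
        · simp [hv a ha, hw a ha, hvi, ha, inner_sub_left, add_comm]
    _ = _ := by
        rw [← det_transpose, ← det_transpose (_ + _)]
        refine det_eq_of_forall_row_eq_smul_add_const w i hwi fun b a => ?_
        rcases eq_or_ne b i with rfl | hb
        · simp [gram_apply, single_apply, hvi, hwi, eq_comm, add_comm]
        · simp [gram_apply, single_apply, hv b hb, hw b hb, hb.symm, hvi, inner_sub_right,
            eq_comm]
          ring

theorem det_one_add_gram (u : n → E) (i : n) :
    (of fun a b => 1 + ⟪u a, u b⟫).det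
      = (gram ℝ u).det + (gram ℝ fun a : {a // a ≠ i} => u a - u i).det := by
  have hgram := det_const_add_inner_eq_det_gram_shear u i 0
  simp only [zero_add, single_zero, add_zero] at hgram
  rw [det_const_add_inner_eq_det_gram_shear u i, det_add_single_self, one_mul]
  congr 1
  · exact hgram.symm
  · congr 1
    ext a b
    simp [gram_apply, Function.update_of_ne a.2, Function.update_of_ne b.2]

end Gram

end Matrix

section DerivDet

variable {𝕜 : Type*} [NontriviallyNormedField 𝕜] {ι : Type*} [Fintype ι] [DecidableEq ι]

theorem DifferentiableAt.matrix_det {M : 𝕜 → Matrix ι ι 𝕜} {t₀ : 𝕜}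
    (hM : ∀ a b, DifferentiableAt 𝕜 (fun t => M t a b) t₀) :
    DifferentiableAt 𝕜 (fun t => (M t).det) t₀ := by
  simp only [det_apply']
  exact .fun_sum fun σ _ => (DifferentiableAt.fun_finsetProd fun a _ => hM _ _).const_mul _

theorem hasDerivAt_prod_of_two_eq_zero {f : ι → 𝕜 → 𝕜} {t₀ : 𝕜}
    (hf : ∀ a, DifferentiableAt 𝕜 (f a) t₀) {a b : ι} (hab : a ≠ b) (ha : f a t₀ = 0)
    (hb : f b t₀ = 0) : HasDerivAt (fun t => ∏ c, f c t) 0 t₀ := by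
  have hprod := HasDerivAt.fun_finsetProd (u := univ) fun c _ => (hf c).hasDerivAt
  rwa [sum_eq_zero fun c _ => ?_] at hprod
  rw [prod_eq_zero_iff.mpr, zero_smul]
  rcases eq_or_ne c a with rfl | hc
  · exact ⟨b, mem_erase.mpr ⟨hab.symm, mem_univ b⟩, hb⟩
  · exact ⟨a, mem_erase.mpr ⟨hc.symm, mem_univ a⟩, ha⟩

theorem hasDerivAt_det_of_row_col_eq_zero {M : 𝕜 → Matrix ι ι 𝕜} {t₀ : 𝕜}
    (hM : ∀ a b, DifferentiableAt 𝕜 (fun t => M t a b) t₀) (i : ι) (hii : ∀ t, M t i i = 0)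
    (hrow : ∀ b, M t₀ i b = 0) (hcol : ∀ a, M t₀ a i = 0) :
    HasDerivAt (fun t => (M t).det) 0 t₀ := by
  -- Each Leibniz term contains the corner entry or two distinct entries of row and column `i`.
  have hterm (σ : Equiv.Perm ι) :
      HasDerivAt (fun t => (Equiv.Perm.sign σ : 𝕜) * ∏ a, M t (σ a) a) 0 t₀ := by
    by_cases hσ : σ i = i
    · have hzero : ∀ t, ∏ a, M t (σ a) a = 0 := fun t =>
        prod_eq_zero (mem_univ i) (by rw [hσ, hii])
      simpa [hzero] using hasDerivAt_const t₀ (0 : 𝕜)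
    · have hne : σ.symm i ≠ i := fun h => hσ (by simpa using congrArg σ h.symm)
      simpa using (hasDerivAt_prod_of_two_eq_zero (fun a => hM (σ a) a) hne
        (by simpa using hrow (σ.symm i)) (hcol (σ i))).const_mul (Equiv.Perm.sign σ : 𝕜)
  simp only [det_apply']
  simpa using HasDerivAt.fun_sum fun σ _ => hterm σ

end DerivDet

section LiftedCoordinates

variable {ι : Type*} {d : ℕ}

def liftCoords (c : ℝ) (v : ι → EuclideanSpace ℝ (Fin d)) : Matrix (Unit ⊕ Fin d) ι ℝ :=
  of fun x j => Sum.elim (fun _ => c) (fun i => v j i) x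

@[simp] theorem liftCoords_inl (c : ℝ) (v : ι → EuclideanSpace ℝ (Fin d)) (u : Unit) (j : ι) :
    liftCoords c v (.inl u) j = c := rfl

@[simp] theorem liftCoords_inr (c : ℝ) (v : ι → EuclideanSpace ℝ (Fin d)) (i : Fin d) (j : ι) :
    liftCoords c v (.inr i) j = v j i := rfl

theorem transpose_mul_liftCoords [Fintype ι] (c : ℝ) (v : ι → EuclideanSpace ℝ (Fin d)) :
    (liftCoords c v)ᵀ * liftCoords c v = of fun a b => c * c + ⟪v a, v b⟫ := by
  ext a b
  simp [mul_apply, Fintype.sum_sum_type, PiLp.inner_apply, mul_comm]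

theorem liftCoords_one_mulVec_eq_zero [Fintype ι] {v : ι → EuclideanSpace ℝ (Fin d)}
    {α : ι → ℝ} (hsum : ∑ j, α j = 0) (hsum2 : ∑ j, α j • v j = 0) :
    liftCoords 1 v *ᵥ α = 0 := by
  ext (u | i)
  · simpa [mulVec, dotProduct] using hsum
  · simpa [mulVec, dotProduct, mul_comm] using congrArg (· i) hsum2

def liftMoment [Fintype ι] [DecidableEq ι] (c : ℝ) (v : ι → EuclideanSpace ℝ (Fin d))
    (α : ι → ℝ) : Matrix (Unit ⊕ Fin d) (Unit ⊕ Fin d) ℝ :=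
  liftCoords c v * diagonal α * (liftCoords c v)ᵀ

theorem liftMoment_apply [Fintype ι] [DecidableEq ι] (c : ℝ) (v : ι → EuclideanSpace ℝ (Fin d))
    (α : ι → ℝ) (x y : Unit ⊕ Fin d) :
    liftMoment c v α x y = ∑ j, α j * (liftCoords c v x j * liftCoords c v y j) := by
  rw [liftMoment, mul_apply]
  simp only [mul_diagonal, transpose_apply]
  exact sum_congr rfl fun j _ => by ring

end LiftedCoordinates

theorem gramFace_eq_det_sub_det {d m : ℕ} (A : Fin m → EuclideanSpace ℝ (Fin d))
    {s : Finset (Fin m)} (hs : s.Nonempty) :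
    gramFace A s = (of fun a b : s => 1 + ⟪A a, A b⟫).det - (gram ℝ fun a : s => A a).det := by
  set x := s.min' hs
  let e : {a : s // a ≠ ⟨x, s.min'_mem hs⟩} ≃ s.erase x :=
    { toFun a := ⟨a.1, mem_erase.mpr ⟨fun h => a.2 (Subtype.ext h), a.1.2⟩⟩
      invFun a :=
        ⟨⟨a, mem_of_mem_erase a.2⟩, fun h => ne_of_mem_erase a.2 (congrArg Subtype.val h)⟩ }
  rw [det_one_add_gram _ ⟨x, s.min'_mem hs⟩, add_sub_cancel_left, gramFace, dif_pos hs,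
    ← det_submatrix_equiv_self e]
  rfl

theorem gramFace_eq_det_liftCoords {d m : ℕ} (A : Fin m → EuclideanSpace ℝ (Fin d))
    {s : Finset (Fin m)} (hs : s.Nonempty) :
    gramFace A s =
      (((liftCoords 1 A)ᵀ * liftCoords 1 A).submatrix (Subtype.val : s → _) Subtype.val).det
      - (((liftCoords 0 A)ᵀ * liftCoords 0 A).submatrix (Subtype.val : s → _) Subtype.val).det := by
  rw [gramFace_eq_det_sub_det A hs, transpose_mul_liftCoords, transpose_mul_liftCoords]
  simp only [one_mul, zero_mul, zero_add]
  rfl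

theorem sum_prod_mul_gramFace {d m : ℕ} (A : Fin m → EuclideanSpace ℝ (Fin d)) (α : Fin m → ℝ)
    (k : ℕ) :
    ∑ s ∈ univ.powersetCard (k + 1), (∏ i ∈ s, α i) * gramFace A s
      = ∑ r ∈ univ.powersetCard (k + 1),
          (((liftMoment 1 A α).submatrix (Subtype.val : r → _) Subtype.val).det
            - ((liftMoment 0 A α).submatrix (Subtype.val : r → _) Subtype.val).det) := by
  rw [sum_congr rfl fun s hs => by
    rw [gramFace_eq_det_liftCoords A (card_pos.mp (by simp [(mem_powersetCard.mp hs).2]))]]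
  simp only [mul_sub, sum_sub_distrib, sum_prod_mul_det_submatrix_transpose_mul_self, liftMoment]

theorem hasDerivAt_det_liftMoment_sub {ι : Type*} [Fintype ι] [DecidableEq ι] {d : ℕ}
    {A : ι → ℝ → EuclideanSpace ℝ (Fin d)} {t₀ : ℝ} (hA : ∀ j, DifferentiableAt ℝ (A j) t₀)
    {α : ι → ℝ} (hsum : ∑ j, α j = 0) (hsum2 : ∑ j, α j • A j t₀ = 0)
    (r : Finset (Unit ⊕ Fin d)) :
    HasDerivAt (fun t =>
      ((liftMoment 1 (A · t) α).submatrix (Subtype.val : r → _) Subtype.val).det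
        - ((liftMoment 0 (A · t) α).submatrix (Subtype.val : r → _) Subtype.val).det) 0 t₀ := by
  by_cases hr : Sum.inl () ∈ r
  · have hflat : ∀ t,
        ((liftMoment 0 (A · t) α).submatrix (Subtype.val : r → _) Subtype.val).det = 0 :=
      fun t => det_eq_zero_of_row_eq_zero ⟨_, hr⟩ fun b => by simp [liftMoment_apply]
    have hker := liftCoords_one_mulVec_eq_zero hsum hsum2
    simp only [hflat, sub_zero]
    refine hasDerivAt_det_of_row_col_eq_zero (fun a b => ?_) ⟨_, hr⟩ (fun t => ?_) (fun b => ?_)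
      (fun a => ?_)
    · simp only [submatrix_apply, liftMoment_apply]
      rcases a with ⟨_ | _, _⟩ <;> rcases b with ⟨_ | _, _⟩ <;> simp <;> fun_prop
    · simpa [liftMoment_apply] using hsum
    · simpa [liftMoment_apply, mulVec, dotProduct, mul_comm] using congrFun hker b.1
    · simpa [liftMoment_apply, mulVec, dotProduct, mul_comm] using congrFun hker a.1
  · have hsame : ∀ t, (liftMoment 1 (A · t) α).submatrix (Subtype.val : r → _) Subtype.val
        = (liftMoment 0 (A · t) α).submatrix (Subtype.val : r → _) (Subtype.val : r → _) := by
      intro t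
      ext ⟨_ | a, ha⟩ ⟨_ | b, hb⟩
      all_goals first | exact absurd ha hr | exact absurd hb hr | simp [liftMoment_apply]
    simpa [hsame] using hasDerivAt_const t₀ (0 : ℝ)

theorem differentiableAt_gramFace {d m : ℕ} {A : Fin m → ℝ → EuclideanSpace ℝ (Fin d)}
    {t₀ : ℝ} (hA : ∀ j, DifferentiableAt ℝ (A j) t₀) (s : Finset (Fin m)) :
    DifferentiableAt ℝ (fun t => gramFace (fun j => A j t) s) t₀ := by
  by_cases hs : s.Nonempty
  · simp only [gramFace, hs, dite_true]
    exact .matrix_det fun a b => ((hA _).sub (hA _)).inner ℝ ((hA _).sub (hA _))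
  · simp only [gramFace, hs, dite_false]
    exact differentiableAt_const _

theorem weighted_sum_deriv_gram_faces_eq_zero_general {n : ℕ}
    (A : Fin (n + 2) → ℝ → EuclideanSpace ℝ (Fin n))
    (hA : ∀ i, ContDiff ℝ 1 (A i)) (t₀ : ℝ)
    (α : Fin (n + 2) → ℝ)
    (hsum : ∑ i, α i = 0) (hsum2 : ∑ i, α i • A i t₀ = 0)
    (k : ℕ) :
    ∑ s ∈ Finset.powersetCard (k + 1) (Finset.univ : Finset (Fin (n + 2))),
      (∏ i ∈ s, α i) * deriv (fun t : ℝ => gramFace (fun i => A i t) s) t₀ = 0 := by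
  have hA' (i : Fin (n + 2)) : DifferentiableAt ℝ (A i) t₀ :=
    ((hA i).differentiable one_ne_zero).differentiableAt
  calc ∑ s ∈ univ.powersetCard (k + 1),
        (∏ i ∈ s, α i) * deriv (fun t => gramFace (fun i => A i t) s) t₀
      = deriv (fun t => ∑ s ∈ univ.powersetCard (k + 1),
          (∏ i ∈ s, α i) * gramFace (fun i => A i t) s) t₀ := by
        rw [deriv_fun_sum fun s _ => (differentiableAt_gramFace hA' s).const_mul _]
        simp only [deriv_const_mul_field]
    _ = 0 := by
        simp only [sum_prod_mul_gramFace]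
        simpa using (HasDerivAt.fun_sum fun r _ =>
          hasDerivAt_det_liftMoment_sub hA' hsum hsum2 r).deriv

/-- For a `C¹` motion of a degenerate `(n+1)`-simplex in `ℝⁿ`, the `α`-weighted sum over all
`k`-faces of the derivatives of their Gram determinants (squared `k`-volumes) vanishes. -/
theorem weighted_sum_deriv_gram_faces_eq_zero {n : ℕ}
    (A : Fin (n + 2) → ℝ → EuclideanSpace ℝ (Fin n))
    (hA : ∀ i, ContDiff ℝ 1 (A i)) (t₀ : ℝ)
    (hgp : InGeneralPosition (fun i => A i t₀))
    (α : Fin (n + 2) → ℝ) (hα : ∀ i, α i ≠ 0)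
    (hsum : ∑ i, α i = 0) (hsum2 : ∑ i, α i • A i t₀ = 0)
    (k : ℕ) (hk1 : 1 ≤ k) (hkn : k ≤ n) :
    ∑ s ∈ Finset.powersetCard (k + 1) (Finset.univ : Finset (Fin (n + 2))),
      (∏ i ∈ s, α i) * deriv (fun t : ℝ => gramFace (fun i => A i t) s) t₀ = 0 :=
  weighted_sum_deriv_gram_faces_eq_zero_general A hA t₀ α hsum hsum2 k
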